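/- arXiv:1602.02016 — 2 statements merged into one kernel-verified Lean document; each statement's English description precedes it below -/
import Mathlib

section
/- Assume Schanuel's Conjecture. Let a ∈ ℂ be transcendental over ℚ and suppose that the transcendence degree of ℚ(a, e^a, e^{e^a}) over ℚ equals 1. Then there exists a rational number r such that e^a = r·a. -/
/-- **Schanuel's Conjecture**: if `λ₁,…,λₙ ∈ ℂ` are `ℚ`-linearly independent,
then the set `{λ₁,…,λₙ,e^{λ₁},…,e^{λₙ}}` contains `n` algebraically
independent elements (transcendence degree at least `n`). -/
def SchanuelConjecture : Prop :=
  ∀ (n : ℕ) (l : Fin n → ℂ), LinearIndependent ℚ l →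
    ∃ f : Fin n → ℂ,
      (∀ i, f i ∈ Set.range l ∪ Set.range (fun i => Complex.exp (l i))) ∧
      AlgebraicIndependent ℚ f

/-- `HasTrdeg S d` says that the transcendence degree over `ℚ` of the field
generated by the set `S ⊆ ℂ` equals `d`: `S` contains `d` algebraically
independent elements, and no more. -/
def HasTrdeg (S : Set ℂ) (d : ℕ) : Prop :=
  (∃ f : Fin d → ℂ, (∀ i, f i ∈ S) ∧ AlgebraicIndependent ℚ f) ∧
    ∀ (e : ℕ) (g : Fin e → ℂ), (∀ i, g i ∈ S) → AlgebraicIndependent ℚ g → e ≤ d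

/-! Since `a` is transcendental it is nonzero, so if `e^a` were not a rational multiple of `a`,
the numbers `a, e^a` would be `ℚ`-linearly independent. Schanuel's Conjecture would then give two
algebraically independent elements among `a, e^a, e^{e^a}`, contradicting transcendence degree 1. -/

theorem SchanuelConjecture.le_of_hasTrdeg (hSC : SchanuelConjecture) {n d : ℕ} {l : Fin n → ℂ}
    {S : Set ℂ} (hl : LinearIndependent ℚ l) (hS : HasTrdeg S d) (hlS : ∀ i, l i ∈ S)
    (hexpS : ∀ i, Complex.exp (l i) ∈ S) : n ≤ d := by
  obtain ⟨f, hf, hfind⟩ := hSC n l hl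
  refine hS.2 n f (fun i => ?_) hfind
  rcases hf i with ⟨j, hj⟩ | ⟨j, hj⟩
  · exact hj ▸ hlS j
  · exact hj ▸ hexpS j

theorem linearIndependent_rat_pair {K : Type*} [DivisionRing K] [CharZero K] {x y : K}
    (hx : x ≠ 0) (hy : ∀ r : ℚ, y ≠ (r : K) * x) : LinearIndependent ℚ ![x, y] :=
  (LinearIndependent.pair_iff' hx).2 fun r hr => hy r (by rw [← hr, Rat.smul_def])

/-- (SC) If `a` is transcendental and `td_ℚ(a, e^a, e^{e^a}) = 1`, then
`e^a = r·a` for some rational `r`. -/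
theorem exp_eq_rat_mul_of_trdeg_one
    (hSC : SchanuelConjecture) (a : ℂ) (ha : Transcendental ℚ a)
    (htd : HasTrdeg ({a, Complex.exp a, Complex.exp (Complex.exp a)} : Set ℂ) 1) :
    ∃ r : ℚ, Complex.exp a = (r : ℂ) * a := by
  by_contra! h
  have ha0 : a ≠ 0 := fun h0 => ha (h0 ▸ isAlgebraic_zero)
  have hli := linearIndependent_rat_pair ha0 h
  have := hSC.le_of_hasTrdeg hli htd (fun i => by fin_cases i <;> simp)
    (fun i => by fin_cases i <;> simp)
  omega
end

section
/- Let f : ℂⁿ → ℂⁿ be given by f(x) = (e^{x₁} − P₁(x), …, e^{xₙ} − Pₙ(x)) where P₁,…,Pₙ ∈ ℂ[x₁,…,xₙ] are nonzero polynomials. Then f has a zero in ℂⁿ, i.e., the system e^{z₁} = P₁(z), …, e^{zₙ} = Pₙ(z) has a solution z ∈ ℂⁿ. -/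
/-!
Pick `u ∈ ℕⁿ` at which the top-degree homogeneous part `Hⱼ` of every `Pⱼ` is nonzero and put
`v = 2πi u`: then `exp (m v) = 1` for `m ∈ ℕ`, while `Pⱼ(m v) ~ m ^ dⱼ Hⱼ(v)` with `dⱼ = deg Pⱼ`.
With `sⱼ = log Pⱼ(m v) = O(log m)`, the substitution `z = m v + s + x` turns the system into
`exp xⱼ = Pⱼ(m v + s + x) / Pⱼ(m v)`. For `‖x‖ ≤ 1/8` the right-hand side is Lipschitz with
constant `O(m ^ (dⱼ - 1)) / m ^ dⱼ` and equals `1 + O(m ^ (dⱼ - 1) log m) / m ^ dⱼ` at `x = 0`, so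
for large `m` the map `x ↦ exp x - (right-hand side)` is a small perturbation of the identity and
has a zero near `0`.
-/

open MvPolynomial Filter Metric Topology Asymptotics

theorem Multiset.norm_prod_map_sub_prod_map_le {ι 𝕜 : Type*} [NormedField 𝕜] (s : Multiset ι)
    {f g : ι → 𝕜} {M δ : ℝ} (hf : ∀ i ∈ s, ‖f i‖ ≤ M) (hg : ∀ i ∈ s, ‖g i‖ ≤ M)
    (hfg : ∀ i ∈ s, ‖f i - g i‖ ≤ δ) :
    ‖(s.map f).prod - (s.map g).prod‖ ≤ s.card * M ^ (s.card - 1) * δ := by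
  induction s using Multiset.induction_on with
  | empty => simp
  | cons a t ih =>
    simp only [Multiset.forall_mem_cons] at hf hg hfg
    have hM : 0 ≤ M := (norm_nonneg _).trans hf.1
    have hδ : 0 ≤ δ := (norm_nonneg _).trans hfg.1
    have hG : ‖(t.map g).prod‖ ≤ M ^ t.card := by
      rw [← Multiset.card_map g t]
      exact (map_multiset_prod (normHom (α := 𝕜)) _).trans_le <|
        Multiset.prod_map_le_pow_card (fun x _ => norm_nonneg x) (Multiset.forall_mem_map_iff.2 hg.2)
    have hstep : M * (t.card * M ^ (t.card - 1) * δ) = t.card * M ^ t.card * δ := by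
      rcases Nat.eq_zero_or_pos t.card with h | h
      · simp [h]
      · rw [← mul_pow_sub_one h.ne' M]; ring
    calc ‖((a ::ₘ t).map f).prod - ((a ::ₘ t).map g).prod‖
        = ‖f a * ((t.map f).prod - (t.map g).prod) + (f a - g a) * (t.map g).prod‖ := by
          simp only [Multiset.map_cons, Multiset.prod_cons]; ring_nf
      _ ≤ M * (t.card * M ^ (t.card - 1) * δ) + δ * M ^ t.card := by
          refine (norm_add_le _ _).trans ?_
          rw [norm_mul, norm_mul]
          gcongr
          exacts [hf.1, ih hf.2 hg.2 hfg.2, hfg.1]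
      _ = (a ::ₘ t).card * M ^ ((a ::ₘ t).card - 1) * δ := by
          rw [hstep, Multiset.card_cons, Nat.add_sub_cancel]; push_cast; ring

theorem Finsupp.prod_pow_eq_prod_map_toMultiset {σ R : Type*} [CommMonoid R] (a : σ →₀ ℕ)
    (z : σ → R) : (a.prod fun i k => z i ^ k) = (a.toMultiset.map z).prod := by
  rw [Finsupp.toMultiset_map, Finsupp.prod_toMultiset,
    Finsupp.prod_mapDomain_index (fun _ => pow_zero _) (fun _ _ _ => pow_add _ _ _)]

theorem Complex.norm_log_le (z : ℂ) : ‖log z‖ ≤ |Real.log ‖z‖| + Real.pi :=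
  calc ‖log z‖ ≤ |(log z).re| + |(log z).im| := norm_le_abs_re_add_abs_im _
    _ ≤ |Real.log ‖z‖| + Real.pi := by
      rw [log_re, log_im]; exact add_le_add_right (abs_arg_le_pi z) _

theorem Complex.norm_exp_sub_exp_sub_sub_le {x y : ℂ} {r : ℝ} (hr : r ≤ 1 / 2) (hx : ‖x‖ ≤ r)
    (hy : ‖y‖ ≤ r) : ‖exp x - exp y - (x - y)‖ ≤ 2 * r * ‖x - y‖ := by
  have hderiv : ∀ t ∈ closedBall (0 : ℂ) r, ‖exp t - 1‖ ≤ 2 * r := fun t ht =>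
    (norm_exp_sub_one_le (by rw [mem_closedBall_zero_iff] at ht; linarith)).trans
      (by rw [mem_closedBall_zero_iff] at ht; linarith)
  calc ‖exp x - exp y - (x - y)‖ = ‖(exp x - x) - (exp y - y)‖ := by ring_nf
    _ ≤ 2 * r * ‖x - y‖ :=
      (convex_closedBall 0 r).norm_image_sub_le_of_norm_hasDerivWithin_le
        (fun t _ => ((hasDerivAt_exp t).sub (hasDerivAt_id t)).hasDerivWithinAt) hderiv
        (mem_closedBall_zero_iff.2 hy) (mem_closedBall_zero_iff.2 hx)

theorem exists_mem_closedBall_eq_zero_of_sub_approx {E : Type*} [NormedAddCommGroup E]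
    [NormedSpace ℝ E] [CompleteSpace E] {F : E → E} {r : ℝ} (hr : 0 ≤ r)
    (hF : ∀ x ∈ closedBall (0 : E) r, ∀ y ∈ closedBall (0 : E) r,
      ‖F x - F y - (x - y)‖ ≤ ‖x - y‖ / 2)
    (h0 : ‖F 0‖ ≤ r / 2) : ∃ x ∈ closedBall (0 : E) r, F x = 0 := by
  rcases subsingleton_or_nontrivial E with hE | hE
  · exact ⟨0, mem_closedBall_self hr, Subsingleton.elim _ _⟩
  let I := (ContinuousLinearEquiv.refl ℝ E).toNonlinearRightInverse
  have hI : (I.nnnorm : ℝ) = 1 := by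
    simp [I, ContinuousLinearEquiv.toNonlinearRightInverse]
  have happrox : ApproximatesLinearOn F (ContinuousLinearMap.id ℝ E) (closedBall 0 r) (1 / 2) :=
    fun x hx y hy => by simpa [div_eq_inv_mul] using hF x hx y hy
  refine happrox.surjOn_closedBall_of_nonlinearRightInverse I hr subset_rfl ?_
  rw [mem_closedBall, dist_zero_left, hI]
  norm_num
  linarith

theorem exists_forall_exp_eq_of_near {σ : Type*} [Fintype σ] (g : σ → (σ → ℂ) → ℂ) (p : σ → ℂ)
    (hg : ∀ j, ∀ x ∈ closedBall (0 : σ → ℂ) (1 / 8), ∀ y ∈ closedBall (0 : σ → ℂ) (1 / 8),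
      ‖g j (p + x) - g j (p + y)‖ ≤ ‖Complex.exp (p j)‖ / 4 * ‖x - y‖)
    (hg0 : ∀ j, ‖g j p - Complex.exp (p j)‖ ≤ ‖Complex.exp (p j)‖ / 16) :
    ∃ z : σ → ℂ, ∀ j, Complex.exp (z j) = g j z := by
  have hexp : ∀ j, 0 < ‖Complex.exp (p j)‖ := fun j => norm_pos_iff.2 (Complex.exp_ne_zero _)
  set F : (σ → ℂ) → σ → ℂ := fun x j => Complex.exp (x j) - g j (p + x) / Complex.exp (p j)
  have hF : ∀ x ∈ closedBall (0 : σ → ℂ) (1 / 8), ∀ y ∈ closedBall (0 : σ → ℂ) (1 / 8),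
      ‖F x - F y - (x - y)‖ ≤ ‖x - y‖ / 2 := by
    intro x hx y hy
    rw [mem_closedBall_zero_iff] at hx hy
    refine (pi_norm_le_iff_of_nonneg (by positivity)).2 fun j => ?_
    have hexp_near := Complex.norm_exp_sub_exp_sub_sub_le (by norm_num)
      ((norm_le_pi_norm x j).trans hx) ((norm_le_pi_norm y j).trans hy)
    have hg_near : ‖(g j (p + x) - g j (p + y)) / Complex.exp (p j)‖ ≤ ‖x - y‖ / 4 := by
      rw [norm_div, div_le_iff₀ (hexp j)]
      linarith [hg j x (mem_closedBall_zero_iff.2 hx) y (mem_closedBall_zero_iff.2 hy)]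
    have hxy : ‖x j - y j‖ ≤ ‖x - y‖ := norm_le_pi_norm (x - y) j
    calc ‖(F x - F y - (x - y)) j‖
        = ‖(Complex.exp (x j) - Complex.exp (y j) - (x j - y j))
            - (g j (p + x) - g j (p + y)) / Complex.exp (p j)‖ := by
          simp only [F, Pi.sub_apply]; ring_nf
      _ ≤ ‖x - y‖ / 2 := by
          refine (norm_sub_le _ _).trans ?_
          linarith
  have hF0 : ‖F 0‖ ≤ 1 / 8 / 2 := by
    refine (pi_norm_le_iff_of_nonneg (by norm_num)).2 fun j => ?_
    have hF0j : F 0 j = -((g j p - Complex.exp (p j)) / Complex.exp (p j)) := by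
      simp only [F, Pi.zero_apply, Complex.exp_zero, add_zero]
      field_simp
      ring
    rw [hF0j, norm_neg, norm_div, div_le_iff₀ (hexp j)]
    linarith [hg0 j]
  obtain ⟨x, -, hx⟩ := exists_mem_closedBall_eq_zero_of_sub_approx (by norm_num) hF hF0
  refine ⟨p + x, fun j => ?_⟩
  have hxj := sub_eq_zero.1 (congrFun hx j)
  rw [Pi.add_apply, Complex.exp_add, hxj, mul_div_cancel₀ _ (Complex.exp_ne_zero _)]

section PolynomialGrowth

variable {f : ℕ → ℂ} {d : ℕ} {c : ℂ}

theorem eventually_ne_zero_of_tendsto_div_pow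
    (hf : Tendsto (fun m : ℕ => f m / (m : ℂ) ^ d) atTop (𝓝 c)) (hc : c ≠ 0) :
    ∀ᶠ m in atTop, f m ≠ 0 :=
  (hf.eventually_ne hc).mono fun m hm hfm => hm (by rw [hfm, zero_div])

theorem isBigO_pow_of_tendsto_div_pow
    (hf : Tendsto (fun m : ℕ => f m / (m : ℂ) ^ d) atTop (𝓝 c)) (hc : c ≠ 0) :
    (fun m : ℕ => (m : ℝ) ^ d) =O[atTop] f := by
  have hratio : Tendsto ((fun m : ℕ => (m : ℂ) ^ d) / f) atTop (𝓝 c⁻¹) :=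
    (hf.inv₀ hc).congr fun m => inv_div _ _
  have h := isBigO_of_div_tendsto_nhds
    ((eventually_ne_zero_of_tendsto_div_pow hf hc).mono fun m hm hfm => absurd hfm hm) _ hratio
  simpa using h.norm_left

theorem isLittleO_log_of_tendsto_div_pow
    (hf : Tendsto (fun m : ℕ => f m / (m : ℂ) ^ d) atTop (𝓝 c)) (hc : c ≠ 0) :
    (fun m => Complex.log (f m)) =o[atTop] (fun m : ℕ => (m : ℝ)) := by
  have hnat := tendsto_natCast_atTop_atTop (R := ℝ)
  have hconst : ∀ a : ℝ, (fun _ : ℕ => a) =o[atTop] (fun m : ℕ => (m : ℝ)) := fun a =>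
    (isLittleO_const_id_atTop a).comp_tendsto hnat
  have hratio : (fun m : ℕ => Real.log ‖f m / (m : ℂ) ^ d‖) =o[atTop] (fun m : ℕ => (m : ℝ)) :=
    ((hf.norm.log (norm_ne_zero_iff.2 hc)).isBigO_one ℝ).trans_isLittleO (hconst 1)
  have hpow : (fun m : ℕ => (d : ℝ) * Real.log m) =o[atTop] (fun m : ℕ => (m : ℝ)) :=
    (Real.isLittleO_log_id_atTop.comp_tendsto hnat).const_mul_left _
  have hlog : (fun m => Real.log ‖f m‖) =o[atTop] (fun m : ℕ => (m : ℝ)) := by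
    refine (hratio.add hpow).congr' ?_ EventuallyEq.rfl
    filter_upwards [eventually_ne_zero_of_tendsto_div_pow hf hc, eventually_ne_atTop 0]
      with m hfm hm
    rw [norm_div, norm_pow, Complex.norm_natCast,
      Real.log_div (norm_ne_zero_iff.2 hfm) (pow_ne_zero _ (Nat.cast_ne_zero.2 hm)),
      Real.log_pow]
    ring
  refine IsBigO.trans_isLittleO (IsBigO.of_bound 1 (Eventually.of_forall fun m => ?_))
    (hlog.abs_left.add (hconst Real.pi))
  rw [one_mul, Real.norm_of_nonneg (by positivity)]
  exact Complex.norm_log_le _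

end PolynomialGrowth

namespace MvPolynomial

variable {σ : Type*}

theorem IsHomogeneous.eval_smul {R : Type*} [CommSemiring R] {φ : MvPolynomial σ R} {n : ℕ}
    (hφ : φ.IsHomogeneous n) (c : R) (x : σ → R) :
    eval (c • x) φ = c ^ n * eval x φ := by
  rw [eval_eq, eval_eq, Finset.mul_sum]
  refine Finset.sum_congr rfl fun a ha => ?_
  have hdeg : ∑ i ∈ a.support, a i = n := by
    simpa [Finsupp.weight, Finsupp.sum, Finsupp.linearCombination] using
      hφ (mem_support_iff.1 ha)
  simp only [Pi.smul_apply, smul_eq_mul, mul_pow, Finset.prod_mul_distrib,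
    Finset.prod_pow_eq_pow_sum, hdeg]
  ring

theorem homogeneousComponent_totalDegree_ne_zero {R : Type*} [CommSemiring R] {P : MvPolynomial σ R}
    (hP : P ≠ 0) : homogeneousComponent P.totalDegree P ≠ 0 := by
  obtain ⟨a, ha, hdeg⟩ := Finset.exists_mem_eq_sup P.support (support_nonempty.2 hP)
    Finsupp.degree
  intro h
  have := congrArg (coeff a) h
  rw [coeff_homogeneousComponent, if_pos (show a.degree = P.totalDegree from hdeg.symm),
    coeff_zero] at this
  exact mem_support_iff.1 ha this

theorem exists_natCast_eval_ne_zero {R : Type*} [CommRing R] [IsDomain R] [CharZero R] [Finite σ]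
    {P : MvPolynomial σ R} (hP : P ≠ 0) : ∃ u : σ → ℕ, eval (fun i => (u i : R)) P ≠ 0 := by
  classical
  by_contra! h
  refine hP (eq_zero_of_eval_zero_at_prod_finset P
    (fun _ => (Finset.range (P.totalDegree + 1)).image Nat.cast) (fun i => ?_) fun x hx => ?_)
  · rw [Finset.card_image_of_injective _ Nat.cast_injective, Finset.card_range]
    exact Nat.lt_succ_of_le (degreeOf_le_totalDegree P i)
  · choose u _ hu using fun i => Finset.mem_image.1 (hx i)
    simpa only [hu] using h u

section Lipschitz

variable {𝕜 : Type*} [NormedField 𝕜]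

def lipschitzBound (P : MvPolynomial σ 𝕜) (M : ℝ) : ℝ :=
  (∑ a ∈ P.support, ‖coeff a P‖) * (P.totalDegree * M ^ (P.totalDegree - 1))

theorem lipschitzBound_nonneg (P : MvPolynomial σ 𝕜) {M : ℝ} (hM : 0 ≤ M) :
    0 ≤ lipschitzBound P M := by
  unfold lipschitzBound; positivity

theorem norm_eval_sub_eval_le [Fintype σ] (P : MvPolynomial σ 𝕜) {M : ℝ} (hM : 1 ≤ M)
    {z w : σ → 𝕜} (hz : ‖z‖ ≤ M) (hw : ‖w‖ ≤ M) :
    ‖eval z P - eval w P‖ ≤ lipschitzBound P M * ‖z - w‖ := by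
  have hmono : ∀ a ∈ P.support, ‖(a.prod fun i k => z i ^ k) - a.prod fun i k => w i ^ k‖ ≤
      P.totalDegree * M ^ (P.totalDegree - 1) * ‖z - w‖ := by
    intro a ha
    rw [Finsupp.prod_pow_eq_prod_map_toMultiset, Finsupp.prod_pow_eq_prod_map_toMultiset]
    have hdeg : a.toMultiset.card ≤ P.totalDegree :=
      (Finsupp.card_toMultiset a).trans_le (le_totalDegree ha)
    refine (a.toMultiset.norm_prod_map_sub_prod_map_le (fun i _ => (norm_le_pi_norm z i).trans hz)
      (fun i _ => (norm_le_pi_norm w i).trans hw) (fun i _ => norm_le_pi_norm (z - w) i)).trans ?_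
    gcongr
  rw [eval_eq, eval_eq, ← Finset.sum_sub_distrib, lipschitzBound, Finset.sum_mul, Finset.sum_mul]
  refine (norm_sum_le _ _).trans (Finset.sum_le_sum fun a ha => ?_)
  rw [← mul_sub, norm_mul, mul_assoc]
  exact mul_le_mul_of_nonneg_left (hmono a ha) (norm_nonneg _)

end Lipschitz

theorem tendsto_eval_natCast_smul_div_pow {𝕜 : Type*} [RCLike 𝕜] (P : MvPolynomial σ 𝕜)
    (v : σ → 𝕜) :
    Tendsto (fun m : ℕ => eval ((m : 𝕜) • v) P / (m : 𝕜) ^ P.totalDegree) atTop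
      (𝓝 (eval v (homogeneousComponent P.totalDegree P))) := by
  set d := P.totalDegree with hd
  -- `g t = t ^ d * P (v / t)`, a polynomial in `t`
  set g : 𝕜 → 𝕜 := fun t => ∑ e ∈ Finset.range (d + 1),
    eval v (homogeneousComponent e P) * t ^ (d - e)
  have hg0 : g 0 = eval v (homogeneousComponent d P) := by
    simp only [g]
    rw [Finset.sum_eq_single_of_mem d (Finset.self_mem_range_succ d) fun e he hne => ?_]
    · simp
    · rw [zero_pow (by grind), mul_zero]
  have hg : Tendsto (fun m : ℕ => g (m : 𝕜)⁻¹) atTop (𝓝 (eval v (homogeneousComponent d P))) :=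
    hg0 ▸ ((show Continuous g by fun_prop).tendsto 0).comp tendsto_inv_atTop_nhds_zero_nat
  refine hg.congr' ?_
  filter_upwards [eventually_ne_atTop 0] with m hm
  have hm' : (m : 𝕜) ≠ 0 := Nat.cast_ne_zero.2 hm
  conv_rhs => rw [← sum_homogeneousComponent P, ← hd]
  rw [map_sum, Finset.sum_div]
  refine Finset.sum_congr rfl fun e he => ?_
  rw [(homogeneousComponent_isHomogeneous e P).eval_smul, inv_pow,
    pow_sub₀ _ hm' (Finset.mem_range_succ_iff.1 he)]
  field_simp

theorem isLittleO_lipschitzBound_mul (P : MvPolynomial σ ℂ) {f : ℕ → ℂ} {c : ℂ}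
    (hf : Tendsto (fun m : ℕ => f m / (m : ℂ) ^ P.totalDegree) atTop (𝓝 c)) (hc : c ≠ 0)
    {R S : ℕ → ℝ} (hR : R =O[atTop] (fun m : ℕ => (m : ℝ)))
    (hS : S =o[atTop] (fun m : ℕ => (m : ℝ))) :
    (fun m => lipschitzBound P (R m) * S m) =o[atTop] f := by
  rcases Nat.eq_zero_or_pos P.totalDegree with hd | hd
  · simp [lipschitzBound, hd]
  refine IsLittleO.trans_isBigO ?_ (isBigO_pow_of_tendsto_div_pow hf hc)
  refine (((hR.pow (P.totalDegree - 1)).const_mul_left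
    ((∑ a ∈ P.support, ‖coeff a P‖) * P.totalDegree)).mul_isLittleO hS).congr
      (fun m => by rw [lipschitzBound]; ring) (fun m => ?_)
  rw [← pow_succ, Nat.sub_add_cancel hd]

end MvPolynomial

section Masser

variable {σ : Type*} [Fintype σ] (P : σ → MvPolynomial σ ℂ)

theorem exists_exp_eq_eval_of_lipschitzBound_le {q s : σ → ℂ}
    (hq : ∀ j, Complex.exp (q j) = 1) (hs : ∀ j, Complex.exp (s j) = eval q (P j))
    (hL : ∀ j, lipschitzBound (P j) (‖q‖ + ‖s‖ + 1) * (1 + ‖s‖) ≤ ‖eval q (P j)‖ / 16) :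
    ∃ z : σ → ℂ, ∀ j, Complex.exp (z j) = eval z (P j) := by
  set R := ‖q‖ + ‖s‖ + 1
  have hR : 1 ≤ R := by simp only [R]; linarith [norm_nonneg q, norm_nonneg s]
  have hexp : ∀ j, Complex.exp ((q + s) j) = eval q (P j) := fun j => by
    rw [Pi.add_apply, Complex.exp_add, hq, hs, one_mul]
  have hnear : ∀ x : σ → ℂ, ‖x‖ ≤ 1 → ‖q + s + x‖ ≤ R := fun x hx =>
    norm_add₃_le.trans (by linarith)
  have hLnn : ∀ j, 0 ≤ lipschitzBound (P j) R := fun j => lipschitzBound_nonneg _ (by linarith)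
  have hL1 : ∀ j, lipschitzBound (P j) R ≤ ‖eval q (P j)‖ / 16 := fun j =>
    (le_mul_of_one_le_right (hLnn j) (by linarith [norm_nonneg s])).trans (hL j)
  have hL2 : ∀ j, lipschitzBound (P j) R * ‖s‖ ≤ ‖eval q (P j)‖ / 16 := fun j =>
    (mul_le_mul_of_nonneg_left (by linarith) (hLnn j)).trans (hL j)
  refine exists_forall_exp_eq_of_near (fun j z => eval z (P j)) (q + s)
    (fun j x hx y hy => ?_) (fun j => ?_)
  · rw [hexp]
    rw [mem_closedBall_zero_iff] at hx hy
    calc _ ≤ lipschitzBound (P j) R * ‖q + s + x - (q + s + y)‖ :=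
          norm_eval_sub_eval_le (P j) hR (hnear x (by linarith)) (hnear y (by linarith))
      _ ≤ ‖eval q (P j)‖ / 4 * ‖x - y‖ := by
          rw [add_sub_add_left_eq_sub]
          gcongr
          linarith [hL1 j, norm_nonneg (eval q (P j))]
  · rw [hexp]
    calc _ ≤ lipschitzBound (P j) R * ‖q + s - q‖ :=
          norm_eval_sub_eval_le (P j) hR (by simpa using hnear 0 (by simp))
            (by linarith [norm_nonneg s])
      _ ≤ _ := by rw [add_sub_cancel_left]; exact hL2 j

theorem exists_exp_natCast_smul_eq_one_and_eval_ne_zero (hP : ∀ j, P j ≠ 0) :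
    ∃ v : σ → ℂ, (∀ (m : ℕ) j, Complex.exp (((m : ℂ) • v) j) = 1) ∧
      ∀ j, eval v (homogeneousComponent (P j).totalDegree (P j)) ≠ 0 := by
  obtain ⟨u, hu⟩ := exists_natCast_eval_ne_zero (Finset.prod_ne_zero_iff.2 fun j _ =>
    homogeneousComponent_totalDegree_ne_zero (hP j))
  rw [map_prod, Finset.prod_ne_zero_iff] at hu
  refine ⟨(2 * Real.pi * Complex.I) • fun i => (u i : ℂ), fun m j => ?_, fun j => ?_⟩
  · have hmj : ((m : ℂ) • (2 * Real.pi * Complex.I) • fun i => (u i : ℂ)) j =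
        ((m * u j : ℕ) : ℂ) * (2 * Real.pi * Complex.I) := by
      simp only [Pi.smul_apply, smul_eq_mul]; push_cast; ring
    rw [hmj, Complex.exp_nat_mul_two_pi_mul_I]
  · rw [(homogeneousComponent_isHomogeneous _ _).eval_smul]
    exact mul_ne_zero (pow_ne_zero _ Complex.two_pi_I_ne_zero) (hu j (Finset.mem_univ j))

theorem eventually_exists_exp_eq_lipschitzBound_le {v : σ → ℂ}
    (hv : ∀ j, eval v (homogeneousComponent (P j).totalDegree (P j)) ≠ 0) :
    ∀ᶠ m : ℕ in atTop, ∃ s : σ → ℂ, (∀ j, Complex.exp (s j) = eval ((m : ℂ) • v) (P j)) ∧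
      ∀ j, lipschitzBound (P j) (‖(m : ℂ) • v‖ + ‖s‖ + 1) * (1 + ‖s‖) ≤
        ‖eval ((m : ℂ) • v) (P j)‖ / 16 := by
  have hlim := fun j => tendsto_eval_natCast_smul_div_pow (P j) v
  set s : ℕ → σ → ℂ := fun m j => Complex.log (eval ((m : ℂ) • v) (P j))
  have hs : (fun m => ‖s m‖) =o[atTop] (fun m : ℕ => (m : ℝ)) :=
    (isLittleO_pi.2 fun j => isLittleO_log_of_tendsto_div_pow (hlim j) (hv j)).norm_left
  have hone : (fun _ : ℕ => (1 : ℝ)) =o[atTop] (fun m : ℕ => (m : ℝ)) :=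
    (isLittleO_const_id_atTop 1).comp_tendsto tendsto_natCast_atTop_atTop
  have hq : (fun m : ℕ => ‖(m : ℂ) • v‖) =O[atTop] (fun m : ℕ => (m : ℝ)) :=
    IsBigO.of_bound ‖v‖ (Eventually.of_forall fun m => by simp [norm_smul, mul_comm])
  have hsmall := fun j => (isLittleO_lipschitzBound_mul (P j) (hlim j) (hv j)
    ((hq.add hs.isBigO).add hone.isBigO) (hone.add hs)).def (by norm_num : (0 : ℝ) < 1 / 16)
  filter_upwards [eventually_all.2 fun j => eventually_ne_zero_of_tendsto_div_pow (hlim j) (hv j),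
    eventually_all.2 hsmall] with m hne hm
  refine ⟨s m, fun j => Complex.exp_log (hne j), fun j => ?_⟩
  exact (le_abs_self _).trans ((hm j).trans_eq (by ring))

end Masser

/-- **Masser's theorem.** For nonzero polynomials `P₁,…,Pₙ ∈ ℂ[x₁,…,xₙ]`,
the system `e^{z₁} = P₁(z), …, e^{zₙ} = Pₙ(z)` has a solution `z ∈ ℂⁿ`;
equivalently, `x ↦ (e^{x₁} − P₁(x), …, e^{xₙ} − Pₙ(x))` has a zero. -/
theorem masser_system_has_solution
    {n : ℕ} (P : Fin n → MvPolynomial (Fin n) ℂ) (hP : ∀ i, P i ≠ 0) :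
    ∃ z : Fin n → ℂ, ∀ i, Complex.exp (z i) = MvPolynomial.eval z (P i) := by
  obtain ⟨v, hv_exp, hv⟩ := exists_exp_natCast_smul_eq_one_and_eval_ne_zero P hP
  obtain ⟨m, s, hs, hL⟩ := (eventually_exists_exp_eq_lipschitzBound_le P hv).exists
  exact exists_exp_eq_eval_of_lipschitzBound_le P (hv_exp m) hs hL
end
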